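/- Suppose the spreading matrix X of the sequence P = (P_0, ..., P_n) is invertible. Then for every 1 ≤ k ≤ n+1 and every input index 0 ≤ i < 2^n, the set D_k(i) = { j_b : W_k(P)[j, i] ≠ 0 } equals the affine subspace P_{k:n} i_b + span(1_b, P_k 1_b, P_{k:k+1} 1_b, ..., P_{k:n-1} 1_b) of F_2^n. In particular D_k(i) has exactly 2^{n-k+1} elements. -/

import Mathlib

open Matrix

/-- Binary representation of `i` as a vector in `F_2^n`, most significant bit first. -/
def bits (n : ℕ) (i : Fin (2 ^ n)) : Fin n → ZMod 2 :=
  fun k => if Nat.testBit i.val (n - 1 - k.val) then 1 else 0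

/-- The vector `1_b = (0,...,0,1)ᵀ`. -/
def oneb (n : ℕ) : Fin n → ZMod 2 := fun k => if k.val = n - 1 then 1 else 0

/-- Permutation matrix `P(Q)` of the linear permutation `π(Q)`:
entry `(j, i)` is `1` iff `j_b = Q i_b`. -/
def permMat (n : ℕ) (Q : Matrix (Fin n) (Fin n) (ZMod 2)) :
    Matrix (Fin (2 ^ n)) (Fin (2 ^ n)) ℤ :=
  Matrix.of fun j i => if bits n j = Q.mulVec (bits n i) then 1 else 0

/-- The array of butterflies `I_{2^{n-1}} ⊗ DFT_2`. -/
def butterflies (n : ℕ) : Matrix (Fin (2 ^ n)) (Fin (2 ^ n)) ℤ :=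
  Matrix.of fun j i =>
    if j.val / 2 = i.val / 2 then (if j.val % 2 = 1 ∧ i.val % 2 = 1 then -1 else 1) else 0

/-- `W(P) = P(P₀)·(I ⊗ DFT₂)·P(P₁) ⋯ (I ⊗ DFT₂)·P(Pₙ)`. -/
def W (n : ℕ) (P : ℕ → Matrix (Fin n) (Fin n) (ZMod 2)) :
    Matrix (Fin (2 ^ n)) (Fin (2 ^ n)) ℤ :=
  permMat n (P 0) * (List.ofFn fun k : Fin n => butterflies n * permMat n (P (k.val + 1))).prod

/-- `P_{i:j} = P_i P_{i+1} ⋯ P_j` (identity if `j < i`). -/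
def Pseg {n : ℕ} (P : ℕ → Matrix (Fin n) (Fin n) (ZMod 2)) (i j : ℕ) :
    Matrix (Fin n) (Fin n) (ZMod 2) :=
  ((List.range (j + 1 - i)).map fun k => P (i + k)).prod

/-- The spreading matrix `X = (P_{0:n-1}1_b | P_{0:n-2}1_b | ⋯ | P_0 1_b)`. -/
def spread (n : ℕ) (P : ℕ → Matrix (Fin n) (Fin n) (ZMod 2)) :
    Matrix (Fin n) (Fin n) (ZMod 2) :=
  Matrix.of fun r c => (Pseg P 0 (n - 1 - c.val)).mulVec (oneb n) r

/-- The matrix whose rows are `(P_{0:n-1}^{-T}1_b)ᵀ, ..., (P_0^{-T}1_b)ᵀ`. -/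
noncomputable def spreadInvRows (n : ℕ) (P : ℕ → Matrix (Fin n) (Fin n) (ZMod 2)) :
    Matrix (Fin n) (Fin n) (ZMod 2) :=
  Matrix.of fun r c => (Pseg P 0 (n - 1 - r.val))⁻¹.transpose.mulVec (oneb n) c

/-- The Hadamard matrix `H_n` with entries `(-1)^{⟨i_b, j_b⟩}`. -/
def hadamard (n : ℕ) : Matrix (Fin (2 ^ n)) (Fin (2 ^ n)) ℤ :=
  Matrix.of fun i j => (-1) ^ (∑ k, bits n i k * bits n j k).val

/-- The cyclic bit-rotation matrix `C_n`: ones on the superdiagonal and in the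
bottom-left corner. -/
def Cmat (n : ℕ) : Matrix (Fin n) (Fin n) (ZMod 2) :=
  Matrix.of fun k l => if l.val = k.val + 1 ∨ (k.val = n - 1 ∧ l.val = 0) then 1 else 0

/-- `W_k(P)`, the partial product of stages `k, ..., n` (identity for `k = n + 1`). -/
def Wk (n : ℕ) (P : ℕ → Matrix (Fin n) (Fin n) (ZMod 2)) (k : ℕ) :
    Matrix (Fin (2 ^ n)) (Fin (2 ^ n)) ℤ :=
  (List.ofFn fun t : Fin (n + 1 - k) => butterflies n * permMat n (P (k + t.val))).prod

/-!
Write `S_k` for the span in the statement. Since `W_k = (I ⊗ DFT₂) · P(P_k) · W_{k+1}`, entry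
`(j, i)` of `W_k` is `±W_{k+1}[l, i] ± W_{k+1}[l', i]`, where `P_k l_b = j_b` and
`P_k l'_b = j_b + 1_b`. By downward induction on `k`, the first term is nonzero iff
`j_b + P_{k:n} i_b ∈ P_k S_{k+1}` and the second iff `j_b + 1_b + P_{k:n} i_b ∈ P_k S_{k+1}`.
Invertibility of `X` makes the vectors spanning `S_k` independent, so `1_b ∉ P_k S_{k+1}`: the two
terms are never both nonzero, hence never cancel, and the entry is nonzero iff
`j_b + P_{k:n} i_b ∈ span{1_b} ⊔ P_k S_{k+1} = S_k`.
-/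

lemma ZModModule.mem_span_singleton_sup_iff {M : Type*} [AddCommGroup M] [Module (ZMod 2) M]
    (T : Submodule (ZMod 2) M) (v x : M) :
    x ∈ Submodule.span (ZMod 2) {v} ⊔ T ↔ x ∈ T ∨ x + v ∈ T := by
  simp only [Submodule.mem_sup, Submodule.mem_span_singleton]
  constructor
  · rintro ⟨_, ⟨a, rfl⟩, z, hz, rfl⟩
    obtain rfl | rfl : a = 0 ∨ a = 1 := by decide +revert
    · left; simpa using hz
    · right; simpa [add_comm v, add_assoc, ZModModule.add_self] using hz
  · rintro (h | h)
    · exact ⟨0, ⟨0, zero_smul _ _⟩, x, h, zero_add x⟩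
    · exact ⟨v, ⟨1, one_smul _ _⟩, x + v, h, by rw [add_left_comm, ZModModule.add_self, add_zero]⟩

lemma units_mul_add_units_mul_ne_zero_iff {R : Type*} [Semiring R] {a b : R} (s t : Rˣ)
    (h : a = 0 ∨ b = 0) : s * a + t * b ≠ 0 ↔ a ≠ 0 ∨ b ≠ 0 := by
  rcases h with rfl | rfl <;> simp

lemma ZModModule.exists_mem_eq_add_iff {M : Type*} [AddCommGroup M] [Module (ZMod 2) M]
    (S : Submodule (ZMod 2) M) (a v : M) : (∃ w ∈ S, v = a + w) ↔ v + a ∈ S :=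
  ⟨fun ⟨w, hw, h⟩ => by rwa [h, add_comm a, add_assoc, ZModModule.add_self, add_zero],
    fun h => ⟨v + a, h, by rw [add_comm v, ← add_assoc, ZModModule.add_self, zero_add]⟩⟩

lemma ncard_setOf_exists_mem_eq_add {K V : Type*} [DivisionRing K] [AddCommGroup V] [Module K V]
    [FiniteDimensional K V] (S : Submodule K V) (a : V) :
    {v | ∃ w ∈ S, v = a + w}.ncard = Nat.card K ^ Module.finrank K S := by
  have hS : {v | ∃ w ∈ S, v = a + w} = (a + ·) '' S := by
    ext v
    simp only [Set.mem_ofPred_eq, Set.mem_image, SetLike.mem_coe, eq_comm]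
  rw [hS, Set.ncard_image_of_injective _ (add_right_injective a), ← Nat.card_coe_set_eq,
    SetLike.coe_sort_coe]
  exact Module.natCard_eq_pow_finrank

section

variable {n : ℕ}

section Pseg

variable (P : ℕ → Matrix (Fin n) (Fin n) (ZMod 2))

lemma Pseg_of_lt {i j : ℕ} (h : j < i) : Pseg P i j = 1 := by
  simp [Pseg, Nat.sub_eq_zero_of_le h]

lemma Pseg_mul_Pseg {i j m : ℕ} (hij : i ≤ j + 1) (hjm : j ≤ m) :
    Pseg P i j * Pseg P (j + 1) m = Pseg P i m := by
  rw [Pseg, Pseg, Pseg, show m + 1 - i = (j + 1 - i) + (m + 1 - (j + 1)) by omega,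
    List.range_add, List.map_append, List.prod_append, List.map_map]
  congr 3
  funext t
  simp only [Function.comp_apply]
  congr 1
  omega

lemma Pseg_eq_mul {k m : ℕ} (h : k ≤ m) : Pseg P k m = P k * Pseg P (k + 1) m := by
  rw [← Pseg_mul_Pseg P (Nat.le_succ k) h]
  simp [Pseg]

end Pseg

lemma bits_injective (n : ℕ) : Function.Injective (bits n) := by
  intro i j h
  refine Fin.ext (Nat.eq_of_testBit_eq fun p => ?_)
  by_cases hp : p < n
  · have := congrFun h ⟨n - 1 - p, by omega⟩
    simp only [bits, show n - 1 - (n - 1 - p) = p by omega] at this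
    by_cases h1 : i.val.testBit p <;> by_cases h2 : j.val.testBit p <;> simp_all
  · have hpow : 2 ^ n ≤ 2 ^ p := Nat.pow_le_pow_right two_pos (by omega)
    rw [Nat.testBit_lt_two_pow (i.isLt.trans_le hpow), Nat.testBit_lt_two_pow (j.isLt.trans_le hpow)]

lemma bits_bijective (n : ℕ) : Function.Bijective (bits n) := by
  rw [Fintype.bijective_iff_injective_and_card]
  exact ⟨bits_injective n, by simp [ZMod.card]⟩

lemma bits_apply_of_div_two_eq {x y : Fin (2 ^ n)} (h : x.val / 2 = y.val / 2) {l : Fin n}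
    (hl : l.val ≠ n - 1) : bits n x l = bits n y l := by
  simp only [bits, show n - 1 - l.val = (n - 2 - l.val) + 1 by omega, Nat.testBit_add_one, h]

lemma bits_apply_last (x : Fin (2 ^ n)) {l : Fin n} (hl : l.val = n - 1) :
    bits n x l = if x.val % 2 = 1 then 1 else 0 := by
  simp [bits, hl, Nat.testBit_zero]

lemma bits_eq_add_oneb {x y : Fin (2 ^ n)} (hxy : y.val = x.val + 1) (hx : x.val % 2 = 0) :
    bits n y = bits n x + oneb n := by
  funext l
  by_cases hl : l.val = n - 1
  · simp [bits_apply_last _ hl, oneb, hl, show y.val % 2 = 1 by omega, hx]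
  · simp [bits_apply_of_div_two_eq (show y.val / 2 = x.val / 2 by omega) hl, oneb, hl]

lemma butterflies_mul_apply (N : Matrix (Fin (2 ^ n)) (Fin (2 ^ n)) ℤ)
    {j i m₀ m₁ : Fin (2 ^ n)} (h₀ : m₀.val = 2 * (j.val / 2)) (h₁ : m₁.val = m₀.val + 1) :
    (butterflies n * N) j i = N m₀ i + (if j.val % 2 = 1 then -1 else 1) * N m₁ i := by
  rw [mul_apply, Finset.sum_eq_add m₀ m₁ (Fin.ne_of_val_ne (by omega))]
  · congr 1
    · simp [butterflies, show j.val / 2 = m₀.val / 2 by omega, show m₀.val % 2 ≠ 1 by omega]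
    · simp [butterflies, show j.val / 2 = m₁.val / 2 by omega, show m₁.val % 2 = 1 by omega]
  · intro c _ hc
    have : j.val / 2 ≠ c.val / 2 := fun h => by
      rcases Nat.mod_two_eq_zero_or_one c.val with hc' | hc'
      · exact hc.1 (Fin.ext (by omega))
      · exact hc.2 (Fin.ext (by omega))
    simp [butterflies, this]
  all_goals simp

lemma exists_butterflies_mul_apply (hn : 0 < n) (N : Matrix (Fin (2 ^ n)) (Fin (2 ^ n)) ℤ)
    (j i : Fin (2 ^ n)) : ∃ j' : Fin (2 ^ n), bits n j' = bits n j + oneb n ∧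
      ∃ s t : ℤˣ, (butterflies n * N) j i = s * N j i + t * N j' i := by
  have h2n : 2 ^ n = 2 ^ (n - 1) * 2 := by rw [← pow_succ, Nat.sub_add_cancel hn]
  have hj := j.isLt
  let m₀ : Fin (2 ^ n) := ⟨2 * (j.val / 2), by omega⟩
  let m₁ : Fin (2 ^ n) := ⟨2 * (j.val / 2) + 1, by omega⟩
  have hm : bits n m₁ = bits n m₀ + oneb n := bits_eq_add_oneb rfl (by simp [m₀])
  have hB := butterflies_mul_apply N (i := i) (m₀ := m₀) (m₁ := m₁) rfl rfl
  by_cases hodd : j.val % 2 = 1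
  · have hj₁ : j = m₁ := Fin.ext (by simp [m₁]; omega)
    refine ⟨m₀, by rw [hj₁, hm, add_assoc, ZModModule.add_self, add_zero], -1, 1, ?_⟩
    rw [hB, if_pos hodd, ← hj₁]
    push_cast
    ring
  · have hj₀ : j = m₀ := Fin.ext (by simp [m₀]; omega)
    refine ⟨m₁, by rw [hj₀, hm], 1, 1, ?_⟩
    rw [hB, if_neg hodd, ← hj₀]
    simp

lemma exists_permMat_mul_apply {Q : Matrix (Fin n) (Fin n) (ZMod 2)} (hQ : IsUnit Q)
    (N : Matrix (Fin (2 ^ n)) (Fin (2 ^ n)) ℤ) (m i : Fin (2 ^ n)) :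
    ∃ l : Fin (2 ^ n), Q *ᵥ bits n l = bits n m ∧ (permMat n Q * N) m i = N l i := by
  obtain ⟨l, hl⟩ := (bits_bijective n).surjective (Q⁻¹ *ᵥ bits n m)
  have hQl : Q *ᵥ bits n l = bits n m := by
    rw [hl, mulVec_mulVec, mul_nonsing_inv _ ((isUnit_iff_isUnit_det Q).1 hQ), one_mulVec]
  refine ⟨l, hQl, ?_⟩
  rw [mul_apply, Finset.sum_eq_single l]
  · simp [permMat, hQl]
  · intro c _ hc
    have : bits n m ≠ Q *ᵥ bits n c := fun h =>
      hc (bits_injective n (mulVec_injective_iff_isUnit.2 hQ (h.symm.trans hQl.symm)))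
    simp [permMat, this]
  · simp

section Wk

variable (P : ℕ → Matrix (Fin n) (Fin n) (ZMod 2))

lemma Wk_of_le {k : ℕ} (hk : n + 1 ≤ k) : Wk n P k = 1 := by
  simp [Wk, List.ofFn_eq_nil_iff.2 (Nat.sub_eq_zero_of_le hk)]

lemma Wk_eq_mul {k : ℕ} (hk : k ≤ n) :
    Wk n P k = butterflies n * permMat n (P k) * Wk n P (k + 1) := by
  rw [Wk, List.ofFn_congr (show n + 1 - k = n + 1 - (k + 1) + 1 by omega), List.ofFn_succ,
    List.prod_cons, Wk]
  simp [mul_assoc, add_assoc, add_comm 1]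

end Wk

section dependencySpan

variable (P : ℕ → Matrix (Fin n) (Fin n) (ZMod 2))

/-- For `k ≥ 1` the vector at `t = 0` is `P_{k:k-1} 1_b = 1_b`; at `k = 0` truncated subtraction
would make it `P_0 1_b`. -/
def dependencyVec (k : ℕ) (t : Fin (n + 1 - k)) : Fin n → ZMod 2 :=
  Pseg P k (k + t.val - 1) *ᵥ oneb n

def dependencySpan (k : ℕ) : Submodule (ZMod 2) (Fin n → ZMod 2) :=
  Submodule.span (ZMod 2) (Set.range (dependencyVec P k))

lemma linearIndependent_dependencyVec (hX : IsUnit (spread n P)) {k : ℕ} (hk : 1 ≤ k) :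
    LinearIndependent (ZMod 2) (dependencyVec P k) := by
  have hcols : LinearIndependent (ZMod 2) (spread n P)ᵀ :=
    linearIndependent_cols_iff_isUnit.2 hX
  let col : Fin (n + 1 - k) → Fin n := fun t => ⟨n - k - t.val, by omega⟩
  have hcol : Function.Injective col := fun a b h => by
    have := congrArg Fin.val h
    simp only [col] at this
    omega
  -- `P_{0:k-1}` maps the `t`-th vector to column `n - k - t` of `X`
  refine LinearIndependent.of_comp (Pseg P 0 (k - 1)).mulVecLin ?_
  convert hcols.comp col hcol using 1
  funext t
  have ht := t.isLt
  have hseg := Pseg_mul_Pseg P (i := 0) (j := k - 1) (m := k + t.val - 1) (by omega) (by omega)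
  rw [Nat.sub_add_cancel hk] at hseg
  ext r
  change (Pseg P 0 (k - 1) *ᵥ (Pseg P k (k + t.val - 1) *ᵥ oneb n)) r =
    (Pseg P 0 (n - 1 - (n - k - t.val)) *ᵥ oneb n) r
  rw [mulVec_mulVec, hseg, show n - 1 - (n - k - t.val) = k + t.val - 1 by omega]

lemma finrank_dependencySpan (hX : IsUnit (spread n P)) {k : ℕ} (hk : 1 ≤ k) :
    Module.finrank (ZMod 2) (dependencySpan P k) = n + 1 - k := by
  rw [dependencySpan, finrank_span_eq_card (linearIndependent_dependencyVec P hX hk),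
    Fintype.card_fin]

lemma dependencySpan_eq_sup {k : ℕ} (hk : 1 ≤ k) (hkn : k ≤ n) :
    dependencySpan P k =
      Submodule.span (ZMod 2) {oneb n} ⊔ (dependencySpan P (k + 1)).map (P k).mulVecLin := by
  rw [dependencySpan, dependencySpan, Submodule.map_span, ← Submodule.span_insert]
  congr 1
  ext x
  simp only [Set.mem_insert_iff, Set.mem_image, Set.mem_range, exists_exists_eq_and,
    mulVecLin_apply, dependencyVec]
  constructor
  · rintro ⟨t, rfl⟩
    rcases Nat.eq_zero_or_pos t.val with h0 | hpos
    · left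
      rw [h0, Pseg_of_lt P (by omega), one_mulVec]
    · right
      refine ⟨⟨t.val - 1, by omega⟩, ?_⟩
      rw [mulVec_mulVec, ← Pseg_eq_mul P (by omega), show k + 1 + (t.val - 1) - 1 = k + t.val - 1 by omega]
  · rintro (rfl | ⟨t, rfl⟩)
    · exact ⟨⟨0, by omega⟩, by rw [Pseg_of_lt P (by simp; omega), one_mulVec]⟩
    · refine ⟨⟨t.val + 1, by omega⟩, ?_⟩
      rw [mulVec_mulVec, ← Pseg_eq_mul P (by omega), show k + (t.val + 1) - 1 = k + 1 + t.val - 1 by omega]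

lemma oneb_notMem_map_dependencySpan (hX : IsUnit (spread n P)) {k : ℕ} (hk : 1 ≤ k)
    (hkn : k ≤ n) : oneb n ∉ (dependencySpan P (k + 1)).map (P k).mulVecLin := by
  intro h
  have hle : dependencySpan P k ≤ (dependencySpan P (k + 1)).map (P k).mulVecLin := by
    rw [dependencySpan_eq_sup P hk hkn]
    exact sup_le ((Submodule.span_singleton_le_iff_mem _ _).2 h) le_rfl
  have := (Submodule.finrank_mono hle).trans (Submodule.finrank_map_le _ _)
  rw [finrank_dependencySpan P hX hk, finrank_dependencySpan P hX (by omega)] at this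
  omega

theorem Wk_apply_ne_zero_iff (hP : ∀ k ≤ n, IsUnit (P k)) (hX : IsUnit (spread n P)) {k : ℕ}
    (hk : 1 ≤ k) (j i : Fin (2 ^ n)) :
    Wk n P k j i ≠ 0 ↔ bits n j + Pseg P k n *ᵥ bits n i ∈ dependencySpan P k := by
  induction hd : n + 1 - k generalizing k j with
  | zero =>
    have : IsEmpty (Fin (n + 1 - k)) := by rw [hd]; infer_instance
    rw [Wk_of_le P (by omega), Pseg_of_lt P (by omega), one_mulVec, dependencySpan,
      Set.range_eq_empty, Submodule.span_empty, Submodule.mem_bot, ← ZModModule.sub_eq_add,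
      sub_eq_zero, (bits_injective n).eq_iff, one_apply]
    simp
  | succ d ih =>
    have hkn : k ≤ n := by omega
    have hinj : Function.Injective (P k).mulVecLin := by
      rw [coe_mulVecLin]
      exact mulVec_injective_iff_isUnit.2 (hP k hkn)
    obtain ⟨j', hj', s, t, hW⟩ :=
      exists_butterflies_mul_apply (by omega) (permMat n (P k) * Wk n P (k + 1)) j i
    obtain ⟨l, hl, hWl⟩ := exists_permMat_mul_apply (hP k hkn) (Wk n P (k + 1)) j i
    obtain ⟨l', hl', hWl'⟩ := exists_permMat_mul_apply (hP k hkn) (Wk n P (k + 1)) j' i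
    set T := (dependencySpan P (k + 1)).map (P k).mulVecLin
    have hT : ∀ m, Wk n P (k + 1) m i ≠ 0 ↔ P k *ᵥ bits n m + Pseg P k n *ᵥ bits n i ∈ T := by
      intro m
      rw [ih (by omega) m (by omega),
        ← Submodule.comap_map_eq_of_injective hinj (dependencySpan P (k + 1)),
        Submodule.mem_comap, mulVecLin_apply, mulVec_add, mulVec_mulVec, ← Pseg_eq_mul P hkn]
    have h₀ := hT l
    have h₁ := hT l'
    rw [hl] at h₀
    rw [hl', hj', add_right_comm] at h₁
    have hdisj : Wk n P (k + 1) l i = 0 ∨ Wk n P (k + 1) l' i = 0 := by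
      by_contra! h
      apply oneb_notMem_map_dependencySpan P hX hk hkn
      have := T.add_mem (h₀.1 h.1) (h₁.1 h.2)
      rwa [← add_assoc, ZModModule.add_self, zero_add] at this
    rw [Wk_eq_mul P hkn, mul_assoc, hW, hWl, hWl', units_mul_add_units_mul_ne_zero_iff s t hdisj,
      h₀, h₁, dependencySpan_eq_sup P hk hkn, ZModModule.mem_span_singleton_sup_iff]

end dependencySpan

end

theorem dependency_set_eq_affine_general (n : ℕ) (P : ℕ → Matrix (Fin n) (Fin n) (ZMod 2))
    (hP : ∀ k ≤ n, IsUnit (P k)) (hX : IsUnit (spread n P))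
    (k : ℕ) (hk1 : 1 ≤ k) (i : Fin (2 ^ n)) :
    {v : Fin n → ZMod 2 | ∃ j : Fin (2 ^ n), Wk n P k j i ≠ 0 ∧ v = bits n j} =
      {v : Fin n → ZMod 2 | ∃ w ∈ Submodule.span (ZMod 2)
          (Set.range fun t : Fin (n + 1 - k) => (Pseg P k (k + t.val - 1)).mulVec (oneb n)),
        v = (Pseg P k n).mulVec (bits n i) + w} ∧
    {v : Fin n → ZMod 2 | ∃ j : Fin (2 ^ n), Wk n P k j i ≠ 0 ∧ v = bits n j}.ncard =
      2 ^ (n + 1 - k) := by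
  have hD : {v | ∃ j : Fin (2 ^ n), Wk n P k j i ≠ 0 ∧ v = bits n j} =
      {v | ∃ w ∈ dependencySpan P k, v = Pseg P k n *ᵥ bits n i + w} := by
    ext v
    obtain ⟨j, rfl⟩ := (bits_bijective n).surjective v
    simp [ZModModule.exists_mem_eq_add_iff, (bits_injective n).eq_iff,
      Wk_apply_ne_zero_iff P hP hX hk1]
  refine ⟨hD, ?_⟩
  rw [hD, ncard_setOf_exists_mem_eq_add, Nat.card_zmod, finrank_dependencySpan P hX hk1]

/-- If `X` is invertible then, for `1 ≤ k ≤ n + 1`, the dependency set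
`D_k(i) = { j_b : W_k(P)[j,i] ≠ 0 }` is the affine subspace
`P_{k:n} i_b + ⟨1_b, P_k 1_b, ..., P_{k:n-1} 1_b⟩`, and has `2^{n+1-k}` elements. -/
theorem dependency_set_eq_affine (n : ℕ) (P : ℕ → Matrix (Fin n) (Fin n) (ZMod 2))
    (hP : ∀ k ≤ n, IsUnit (P k)) (hX : IsUnit (spread n P))
    (k : ℕ) (hk1 : 1 ≤ k) (hk2 : k ≤ n + 1) (i : Fin (2 ^ n)) :
    {v : Fin n → ZMod 2 | ∃ j : Fin (2 ^ n), Wk n P k j i ≠ 0 ∧ v = bits n j} =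
      {v : Fin n → ZMod 2 | ∃ w ∈ Submodule.span (ZMod 2)
          (Set.range fun t : Fin (n + 1 - k) => (Pseg P k (k + t.val - 1)).mulVec (oneb n)),
        v = (Pseg P k n).mulVec (bits n i) + w} ∧
    {v : Fin n → ZMod 2 | ∃ j : Fin (2 ^ n), Wk n P k j i ≠ 0 ∧ v = bits n j}.ncard =
      2 ^ (n + 1 - k) :=
  dependency_set_eq_affine_general n P hP hX k hk1 i
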